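/- For every integer m ≥ 0, π/6 = ln(((9 + 5√3)·L_{2m}² + (3 + √3)·L_{2m}·√((2 + √3)²·L_{2m}² + 4) + 4) / ((5 + 3√3)·L_{2m}² + (1 + √3)·L_{2m}·√((2 + √3)²·L_{2m}² + 4) + 4)) − 4 · ∑_{n=0}^∞ (1/(4n+3)) · L_{2m(4n+3)} · (2 / ((2 + √3)·L_{2m} + √((2 + √3)²·L_{2m}² + 4)))^{4n+3}, where the series on the right converges. -/

import Mathlib

set_option maxHeartbeats 1000000

open Real goldenRatio

/-- Lucas numbers: `L 0 = 2`, `L 1 = 1`, `L (n+2) = L (n+1) + L n`. -/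
def lucasNum : ℕ → ℕ
  | 0 => 2
  | 1 => 1
  | n + 2 => lucasNum (n + 1) + lucasNum n

lemma lucas_binet (n : ℕ) : (lucasNum n : ℝ) = φ ^ n + ψ ^ n := by
  induction n using Nat.twoStepInduction with
  | zero => norm_num [lucasNum]
  | one => simp [lucasNum, goldenRatio_add_goldenConj]
  | more n ih1 ih2 =>
    show ((lucasNum (n+1) + lucasNum n : ℕ) : ℝ) = _
    push_cast
    rw [ih1, ih2]
    have h5 : Real.sqrt 5 ^ 2 = 5 := Real.sq_sqrt (by norm_num)
    linear_combination (φ ^ n) * goldenRatio_sq + (ψ ^ n) * goldenConj_sq + (-(φ ^ n + ψ ^ n)/2) * h5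

lemma lucas_even (k : ℕ) : (lucasNum (2*k) : ℝ) = φ ^ (2*k) + (φ ^ (2*k))⁻¹ := by
  rw [lucas_binet]
  have hψ : ψ = -φ⁻¹ := by
    have h5 : Real.sqrt 5 ^ 2 = 5 := Real.sq_sqrt (by norm_num)
    field_simp [goldenRatio_ne_zero]
    linear_combination goldenRatio_mul_goldenConj + (-3/4) * h5
  rw [hψ]
  rw [show (-φ⁻¹) ^ (2*k) = (φ⁻¹) ^ (2*k) from Even.neg_pow ⟨k, by ring⟩ _, inv_pow]

lemma hasSum_quarter {t : ℝ} (ht : |t| < 1) :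
    HasSum (fun n : ℕ => t ^ (4*n+3) / (4*(n:ℝ)+3))
      ((Real.log (1+t) - Real.log (1-t)) / 4 - Real.arctan t / 2) := by
  have h1 := hasSum_log_sub_log_of_abs_lt_one ht
  have h2 := Real.hasSum_arctan (x := t) (by rwa [Real.norm_eq_abs])
  have h3 := (h1.div_const 4).sub (h2.div_const 2)
  have hinj : Function.Injective (fun n : ℕ => 2*n+1) := fun a b h => by simpa using h
  have hvan : ∀ x ∉ Set.range (fun n : ℕ => 2*n+1),
      (2 * (1/(2*(x:ℝ)+1)) * t^(2*x+1)) / 4 - ((-1)^x * t^(2*x+1) / ((2*x+1 : ℕ) : ℝ)) / 2 = 0 := by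
    intro x hx
    have hxe : Even x := by
      rcases Nat.even_or_odd x with h | h
      · exact h
      · obtain ⟨k, hk⟩ := h
        exact absurd ⟨k, by simp [hk]⟩ hx
    rw [hxe.neg_one_pow]
    push_cast
    ring
  have h4 := (hinj.hasSum_iff hvan).2 h3
  refine h4.congr_fun fun n => ?_
  simp only [Function.comp]
  have he : 2*(2*n+1)+1 = 4*n+3 := by ring
  have ho : Odd (2*(2*n+1)+1) := ⟨2*n+1, by ring⟩
  rw [Odd.neg_one_pow ⟨n, by ring⟩, he]
  push_cast
  ring

theorem pi_div_six_lucas_subseries (m : ℕ) :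
    Summable
      (fun n : ℕ => 1 / (4 * (n : ℝ) + 3) *
        (lucasNum (2 * m * (4 * n + 3)) : ℝ) *
        (2 / ((2 + Real.sqrt 3) * (lucasNum (2 * m) : ℝ) +
          Real.sqrt ((2 + Real.sqrt 3) ^ 2 * (lucasNum (2 * m) : ℝ) ^ 2 + 4)))
            ^ (4 * n + 3)) ∧
    Real.pi / 6 =
      Real.log
        (((9 + 5 * Real.sqrt 3) * (lucasNum (2 * m) : ℝ) ^ 2 +
          (3 + Real.sqrt 3) * (lucasNum (2 * m) : ℝ) *
            Real.sqrt ((2 + Real.sqrt 3) ^ 2 * (lucasNum (2 * m) : ℝ) ^ 2 + 4) + 4) /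
         ((5 + 3 * Real.sqrt 3) * (lucasNum (2 * m) : ℝ) ^ 2 +
          (1 + Real.sqrt 3) * (lucasNum (2 * m) : ℝ) *
            Real.sqrt ((2 + Real.sqrt 3) ^ 2 * (lucasNum (2 * m) : ℝ) ^ 2 + 4) + 4)) -
      4 * ∑' n : ℕ, 1 / (4 * (n : ℝ) + 3) *
        (lucasNum (2 * m * (4 * n + 3)) : ℝ) *
        (2 / ((2 + Real.sqrt 3) * (lucasNum (2 * m) : ℝ) +
          Real.sqrt ((2 + Real.sqrt 3) ^ 2 * (lucasNum (2 * m) : ℝ) ^ 2 + 4)))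
            ^ (4 * n + 3) := by
  have hr : Real.sqrt 3 ^ 2 = 3 := Real.sq_sqrt (by norm_num)
  set r : ℝ := Real.sqrt 3 with hr_def
  have hr0 : 0 < r := Real.sqrt_pos.2 (by norm_num)
  have hr1 : 1 < r := by nlinarith
  set L : ℝ := (lucasNum (2 * m) : ℝ) with hL_def
  set A : ℝ := φ ^ (2 * m) with hA_def
  have hA1 : 1 ≤ A := one_le_pow₀ one_lt_goldenRatio.le
  clear_value r L A
  have hA0 : 0 < A := lt_of_lt_of_le one_pos hA1
  have hAmul : A * A⁻¹ = 1 := mul_inv_cancel₀ hA0.ne'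
  have hLA : L = A + A⁻¹ := by rw [hL_def, hA_def]; exact lucas_even m
  have hL2 : 2 ≤ L := by
    rw [hLA]; nlinarith [sq_nonneg (A - 1)]
  have hs : Real.sqrt ((2 + r) ^ 2 * L ^ 2 + 4) ^ 2 = (2 + r) ^ 2 * L ^ 2 + 4 :=
    Real.sq_sqrt (by positivity)
  set s : ℝ := Real.sqrt ((2 + r) ^ 2 * L ^ 2 + 4) with hs_def
  have hs0 : 0 < s := Real.sqrt_pos.2 (by positivity)
  have hden : 0 < (2 + r) * L + s := by nlinarith
  set x : ℝ := 2 / ((2 + r) * L + s) with hx_def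
  clear_value s x
  have hx0 : 0 < x := by rw [hx_def]; exact div_pos two_pos hden
  have hxs : x = (s - (2 + r) * L) / 2 := by
    rw [hx_def, div_eq_div_iff hden.ne' two_ne_zero]
    linear_combination -hs
  have hx1 : x < 1 := by
    rw [hx_def, div_lt_one hden]; nlinarith
  have hcx : 1 - x ^ 2 = (2 + r) * L * x := by
    rw [hxs]; linear_combination (-(1:ℝ)/4) * hs
  set t : ℝ := A * x with ht_def
  set u : ℝ := A⁻¹ * x with hu_def
  clear_value t u
  have ht0 : 0 < t := by rw [ht_def]; exact mul_pos hA0 hx0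
  have hu0 : 0 < u := by rw [hu_def]; exact mul_pos (inv_pos.2 hA0) hx0
  have htu : t * u = x ^ 2 := by
    rw [ht_def, hu_def]; field_simp
  have htu_sum : t + u = L * x := by rw [ht_def, hu_def, hLA]; ring
  have ht1 : t < 1 := by
    rw [ht_def, hx_def, mul_div_assoc', div_lt_one hden, hLA]
    have hAi : 0 < A⁻¹ := inv_pos.2 hA0
    nlinarith
  have hu1 : u < 1 := by
    have hAiA : A⁻¹ ≤ A := by nlinarith [mul_nonneg (inv_pos.2 hA0).le (sub_nonneg.2 hA1)]
    have ht1' : A * x < 1 := by rw [← ht_def]; exact ht1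
    rw [hu_def]
    nlinarith
  have hT := hasSum_quarter (abs_lt.2 ⟨by linarith, ht1⟩)
  have hU := hasSum_quarter (abs_lt.2 ⟨by linarith, hu1⟩)
  have hS := hT.add hU
  have hfun : (fun n : ℕ => 1 / (4 * (n : ℝ) + 3) *
        (lucasNum (2 * m * (4 * n + 3)) : ℝ) * x ^ (4 * n + 3)) =
      fun n : ℕ => t ^ (4*n+3) / (4*(n:ℝ)+3) + u ^ (4*n+3) / (4*(n:ℝ)+3) := by
    funext n
    have hlu : (lucasNum (2 * m * (4 * n + 3)) : ℝ) = A ^ (4*n+3) + (A ^ (4*n+3))⁻¹ := by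
      rw [show 2 * m * (4 * n + 3) = 2 * (m * (4 * n + 3)) by ring, lucas_even]
      have hAp : φ ^ (2 * (m * (4 * n + 3))) = A ^ (4 * n + 3) := by
        rw [hA_def, ← pow_mul]
        congr 1
        ring
      rw [hAp]
    rw [hlu, ht_def, hu_def, mul_pow, mul_pow, inv_pow]
    ring
  constructor
  · rw [hfun]; exact hS.summable
  rw [hfun, hS.tsum_eq]
  have harc : Real.arctan t + Real.arctan u = π / 12 := by
    have htul : t * u < 1 := by nlinarith
    rw [Real.arctan_add htul]
    have hq : (t + u) / (1 - t * u) = 2 - r := by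
      rw [htu_sum, htu, hcx, div_eq_iff (by positivity)]
      linear_combination (L * x) * hr
    rw [hq]
    have h1 : Real.arctan r = π / 3 :=
      Real.arctan_eq_of_tan_eq (hr_def ▸ Real.tan_pi_div_three)
        ⟨by linarith [Real.pi_pos], by linarith [Real.pi_pos]⟩
    have h2 : (2 - r) * 1 < 1 := by nlinarith
    have h3 := Real.arctan_add h2
    have h4 : ((2 - r) + 1) / (1 - (2 - r) * 1) = r := by
      rw [div_eq_iff (by nlinarith)]
      linear_combination -hr
    rw [h4, h1, Real.arctan_one] at h3
    linarith
  have hplus : (1 + t) * (1 + u) = 1 + L * x + x ^ 2 := by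
    linear_combination htu_sum + htu
  have hminus : (1 - t) * (1 - u) = 1 - L * x + x ^ 2 := by
    linear_combination htu - htu_sum
  have hplus2 : 1 + L * x + x ^ 2 = ((5 + 3*r) * L ^ 2 - (1 + r) * L * s + 4) / 2 := by
    rw [hxs]
    linear_combination (1/4) * hs + (L^2/2) * hr
  have hminus2 : 1 - L * x + x ^ 2 = ((9 + 5*r) * L ^ 2 - (3 + r) * L * s + 4) / 2 := by
    rw [hxs]
    linear_combination (1/4) * hs + (L^2/2) * hr
  have hDp : 0 < (5 + 3 * r) * L ^ 2 + (1 + r) * L * s + 4 := by nlinarith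
  have hNm : 0 < ((9 + 5*r) * L ^ 2 - (3 + r) * L * s + 4) / 2 := by
    rw [← hminus2]; nlinarith
  have hkey : ((9 + 5 * r) * L ^ 2 + (3 + r) * L * s + 4) /
      ((5 + 3 * r) * L ^ 2 + (1 + r) * L * s + 4) =
      ((1 + t) * (1 + u)) / ((1 - t) * (1 - u)) := by
    rw [hplus, hminus, hplus2, hminus2, div_eq_div_iff hDp.ne' hNm.ne']
    linear_combination (-(4 + 2*r) * L^2) * hs + (-2 * (r + 2) * L^4) * hr
  rw [hkey, Real.log_div (by positivity) (by nlinarith),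
    Real.log_mul (by linarith) (by linarith), Real.log_mul (by linarith) (by linarith)]
  linarith [harc]
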